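/- Let B(1), G_u, G_v be independent real random variables with B(1) standard normal, G_u centered normal with variance u > 0, and G_v centered normal with variance v > 0. Define X := B(1) + G_u·1_{B(1)>0} + G_v·1_{B(1)≤0}. Then E[X³] = 3·E[(B(1))⁺]·(u − v), which is nonzero whenever u ≠ v. -/

import Mathlib

/-!
Given `B = b`, the variable `X` is `b + G` with `G` centred Gaussian of variance `u` if `b > 0`
and `v` otherwise. Expanding the cube with `E G = E G³ = 0` gives `E[X³ | B = b] = b³ + 3 b Var G`.
Integrating over `b`, the cubic terms add up to `E B³ = 0` and, as `E B = 0`, the linear terms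
give `3 u E[B⁺] + 3 v E[B 1_{B ≤ 0}] = 3 (u - v) E[B⁺]`, which is nonzero since `E[B⁺] > 0`.
-/

open MeasureTheory ProbabilityTheory Finset
open scoped NNReal

namespace MeasureTheory

variable {Ω : Type*} [MeasurableSpace Ω] {P : Measure Ω}

lemma MemLp.integrable_pow_of_le [IsFiniteMeasure P] {X : Ω → ℝ} {n k : ℕ}
    (hX : MemLp X n P) (hk : k ≤ n) : Integrable (fun ω ↦ X ω ^ k) P := by
  have h := (hX.mono_exponent (by exact_mod_cast hk)).integrable_norm_pow'
  simp only [Real.norm_eq_abs, ← abs_pow] at h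
  exact (integrable_norm_iff (hX.aestronglyMeasurable.pow k)).mp h

lemma MemLp.integrable_comp_mul_pow_of_le [IsFiniteMeasure P] {X Y : Ω → ℝ} {n k : ℕ}
    (hX : MemLp X n P) (hk : k ≤ n) (hY : AEMeasurable Y P) {h : ℝ → ℝ} (hh : Measurable h)
    {C : ℝ} (hC : ∀ y, ‖h y‖ ≤ C) : Integrable (fun ω ↦ h (Y ω) * X ω ^ k) P :=
  (hX.integrable_pow_of_le hk).bdd_mul (hh.comp_aemeasurable hY).aestronglyMeasurable
    (ae_of_all _ fun ω ↦ hC (Y ω))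

end MeasureTheory

namespace ProbabilityTheory

variable {Ω : Type*} [MeasurableSpace Ω] {P : Measure Ω}

lemma hasLaw_of_map_eq {𝓧 : Type*} [MeasurableSpace 𝓧] {X : Ω → 𝓧} {μ : Measure 𝓧} [NeZero μ]
    (h : P.map X = μ) : HasLaw X μ P :=
  ⟨.of_map_ne_zero (h ▸ NeZero.ne μ), h⟩

lemma HasLaw.memLp {X : Ω → ℝ} {μ : Measure ℝ} {p : ENNReal} (hX : HasLaw X μ P)
    (h : MemLp id p μ) : MemLp X p P := by
  rw [← hX.map_eq] at h
  exact (memLp_map_measure_iff h.aestronglyMeasurable hX.aemeasurable).mp h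

section Gaussian

variable {v : ℝ≥0}

lemma integral_pow_gaussianReal_of_odd {n : ℕ} (hn : Odd n) :
    ∫ x, x ^ n ∂gaussianReal 0 v = 0 := by
  have h := integral_map (μ := gaussianReal 0 v) measurable_neg.aemeasurable
    (f := fun x : ℝ ↦ x ^ n) (by fun_prop)
  rw [gaussianReal_map_neg, neg_zero] at h
  simp only [hn.neg_pow, integral_neg] at h
  linarith

lemma integral_sq_gaussianReal : ∫ x, x ^ 2 ∂gaussianReal 0 v = v := by
  have h := variance_fun_id_gaussianReal (μ := 0) (v := v)
  rwa [variance_of_integral_eq_zero aemeasurable_id' integral_id_gaussianReal] at h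

lemma integral_max_zero_gaussianReal_pos (μ : ℝ) (hv : v ≠ 0) :
    0 < ∫ x, max x 0 ∂gaussianReal μ v := by
  have hint : Integrable (fun x : ℝ ↦ max x 0) (gaussianReal μ v) :=
    (memLp_id_gaussianReal 1).integrable le_rfl |>.pos_part
  have hsupp : (Function.support fun x : ℝ ↦ max x 0) = Set.Ioi 0 := by
    ext x
    simp
  rw [integral_pos_iff_support_of_nonneg (fun x ↦ le_max_right x 0) hint, hsupp, pos_iff_ne_zero]
  exact fun h ↦ by simpa using gaussianReal_absolutelyContinuous' μ hv h

end Gaussian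

variable {Y G : Ω → ℝ} {h : ℝ → ℝ} {C : ℝ}

theorem IndepFun.integral_mul_add_pow [IsFiniteMeasure P] {n : ℕ} (hYG : Y ⟂ᵢ[P] G)
    (hY : MemLp Y n P) (hG : MemLp G n P) (hh : Measurable h) (hC : ∀ y, ‖h y‖ ≤ C) :
    ∫ ω, h (Y ω) * (Y ω + G ω) ^ n ∂P =
      ∑ k ∈ range (n + 1), n.choose k * (∫ ω, h (Y ω) * Y ω ^ k ∂P) * ∫ ω, G ω ^ (n - k) ∂P := by
  have hYm := hY.aestronglyMeasurable.aemeasurable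
  have hexpand : ∀ ω, h (Y ω) * (Y ω + G ω) ^ n =
      ∑ k ∈ range (n + 1), n.choose k * ((h (Y ω) * Y ω ^ k) * G ω ^ (n - k)) := fun ω ↦ by
    rw [add_pow, mul_sum]
    exact sum_congr rfl fun k _ ↦ by ring
  simp_rw [hexpand]
  rw [integral_finsetSum]
  · refine sum_congr rfl fun k _ ↦ ?_
    rw [integral_const_mul, mul_assoc]
    congr 1
    exact hYG.integral_fun_comp_mul_comp hYm hG.aestronglyMeasurable.aemeasurable
      (hh.mul (measurable_id.pow_const k)).aestronglyMeasurable
      (measurable_id.pow_const (n - k)).aestronglyMeasurable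
  · intro k hk
    have hindep : (fun ω ↦ h (Y ω) * Y ω ^ k) ⟂ᵢ[P] (fun ω ↦ G ω ^ (n - k)) :=
      hYG.comp (hh.mul (measurable_id.pow_const k)) (measurable_id.pow_const (n - k))
    refine (hindep.integrable_mul ?_ (hG.integrable_pow_of_le (Nat.sub_le n k))).const_mul _
    exact hY.integrable_comp_mul_pow_of_le (Nat.lt_succ_iff.mp (mem_range.mp hk)) hYm hh hC

theorem IndepFun.integral_mul_add_gaussianReal_pow_three [IsProbabilityMeasure P] {v : ℝ≥0}
    (hYG : Y ⟂ᵢ[P] G) (hY : MemLp Y 3 P) (hG : HasLaw G (gaussianReal 0 v) P)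
    (hh : Measurable h) (hC : ∀ y, ‖h y‖ ≤ C) :
    ∫ ω, h (Y ω) * (Y ω + G ω) ^ 3 ∂P =
      ∫ ω, h (Y ω) * Y ω ^ 3 ∂P + 3 * v * ∫ ω, h (Y ω) * Y ω ∂P := by
  have hmoment : ∀ j : ℕ, ∫ ω, G ω ^ j ∂P = ∫ x, x ^ j ∂gaussianReal 0 v := fun j ↦
    hG.integral_comp (f := fun x ↦ x ^ j) (by fun_prop)
  rw [hYG.integral_mul_add_pow hY (hG.memLp (by exact memLp_id_gaussianReal 3)) hh hC]
  norm_num [sum_range_succ, hmoment, integral_pow_gaussianReal_of_odd (v := v) (n := 3) ⟨1, rfl⟩,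
    integral_sq_gaussianReal]
  ring

theorem integral_add_ite_gaussianReal_pow_three [IsProbabilityMeasure P] {G₁ G₂ : Ω → ℝ}
    {v₁ v₂ : ℝ≥0} (hY : MemLp Y 3 P) (hY₁ : ∫ ω, Y ω ∂P = 0) (hY₃ : ∫ ω, Y ω ^ 3 ∂P = 0)
    (hG₁ : HasLaw G₁ (gaussianReal 0 v₁) P) (hG₂ : HasLaw G₂ (gaussianReal 0 v₂) P)
    (hYG₁ : Y ⟂ᵢ[P] G₁) (hYG₂ : Y ⟂ᵢ[P] G₂) :
    ∫ ω, (Y ω + if 0 < Y ω then G₁ ω else G₂ ω) ^ 3 ∂P =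
      3 * (∫ ω, max (Y ω) 0 ∂P) * ((v₁ : ℝ) - v₂) := by
  have hYm := hY.aestronglyMeasurable.aemeasurable
  set pos : ℝ → ℝ := (Set.Ioi 0).indicator 1 with hpos_def
  have hpos : Measurable pos := measurable_const.indicator measurableSet_Ioi
  have hneg : Measurable fun y ↦ 1 - pos y := measurable_const.sub hpos
  have hpos_le : ∀ y, ‖pos y‖ ≤ 1 := fun y ↦ by by_cases hy : 0 < y <;> simp [hpos_def, hy]
  have hneg_le : ∀ y, ‖1 - pos y‖ ≤ 1 := fun y ↦ by by_cases hy : 0 < y <;> simp [hpos_def, hy]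
  have hsplit : ∀ ω, (Y ω + if 0 < Y ω then G₁ ω else G₂ ω) ^ 3 =
      pos (Y ω) * (Y ω + G₁ ω) ^ 3 + (1 - pos (Y ω)) * (Y ω + G₂ ω) ^ 3 := fun ω ↦ by
    by_cases hω : 0 < Y ω <;> simp [hpos_def, hω]
  have hcompl : ∀ k ≤ 3, ∫ ω, (1 - pos (Y ω)) * Y ω ^ k ∂P =
      ∫ ω, Y ω ^ k ∂P - ∫ ω, pos (Y ω) * Y ω ^ k ∂P := fun k hk ↦ by
    simp_rw [sub_mul, one_mul]
    exact integral_sub (hY.integrable_pow_of_le hk)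
      (hY.integrable_comp_mul_pow_of_le hk hYm hpos hpos_le)
  have hcompl₁ := hcompl 1 (by norm_num)
  simp only [pow_one, hY₁] at hcompl₁
  calc ∫ ω, (Y ω + if 0 < Y ω then G₁ ω else G₂ ω) ^ 3 ∂P
      = ∫ ω, pos (Y ω) * (Y ω + G₁ ω) ^ 3 ∂P + ∫ ω, (1 - pos (Y ω)) * (Y ω + G₂ ω) ^ 3 ∂P := by
        simp_rw [hsplit]
        exact integral_add
          ((hY.add (hG₁.memLp (by exact memLp_id_gaussianReal 3))).integrable_comp_mul_pow_of_le
            le_rfl hYm hpos hpos_le)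
          ((hY.add (hG₂.memLp (by exact memLp_id_gaussianReal 3))).integrable_comp_mul_pow_of_le
            le_rfl hYm hneg hneg_le)
    _ = 3 * (∫ ω, pos (Y ω) * Y ω ∂P) * ((v₁ : ℝ) - v₂) := by
        rw [hYG₁.integral_mul_add_gaussianReal_pow_three hY hG₁ hpos hpos_le,
          hYG₂.integral_mul_add_gaussianReal_pow_three hY hG₂ hneg hneg_le,
          hcompl 3 le_rfl, hY₃, hcompl₁]
        ring
    _ = 3 * (∫ ω, max (Y ω) 0 ∂P) * ((v₁ : ℝ) - v₂) := by
        congr 3 with ω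
        by_cases hω : 0 < Y ω <;> simp [hpos_def, hω, le_of_lt, not_lt.mp]

end ProbabilityTheory

theorem third_moment_ocone_counterexample_general {Ω : Type*} [MeasurableSpace Ω]
    (P : Measure Ω) [IsProbabilityMeasure P] (B Gu Gv : Ω → ℝ)
    (u v : NNReal)
    (hB : Measure.map B P = gaussianReal 0 1)
    (hGu : Measure.map Gu P = gaussianReal 0 u)
    (hGv : Measure.map Gv P = gaussianReal 0 v)
    (hindep : iIndepFun ![B, Gu, Gv] P)
    (X : Ω → ℝ) (hX : ∀ ω, X ω = B ω + (if 0 < B ω then Gu ω else Gv ω)) :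
    (∫ ω, (X ω) ^ 3 ∂P = 3 * (∫ ω, max (B ω) 0 ∂P) * ((u : ℝ) - (v : ℝ))) ∧
      (u ≠ v → ∫ ω, (X ω) ^ 3 ∂P ≠ 0) := by
  have hB' : HasLaw B (gaussianReal 0 1) P := hasLaw_of_map_eq hB
  have hBGu : B ⟂ᵢ[P] Gu := by simpa using hindep.indepFun (i := 0) (j := 1) (by decide)
  have hBGv : B ⟂ᵢ[P] Gv := by simpa using hindep.indepFun (i := 0) (j := 2) (by decide)
  have hmoment : ∫ ω, X ω ^ 3 ∂P = 3 * (∫ ω, max (B ω) 0 ∂P) * ((u : ℝ) - v) := by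
    simp_rw [hX]
    exact integral_add_ite_gaussianReal_pow_three (hB'.memLp (by exact memLp_id_gaussianReal 3))
      (hB'.integral_eq.trans integral_id_gaussianReal)
      ((hB'.integral_comp (f := fun x ↦ x ^ 3) (by fun_prop)).trans
        (integral_pow_gaussianReal_of_odd ⟨1, rfl⟩))
      (hasLaw_of_map_eq hGu) (hasLaw_of_map_eq hGv) hBGu hBGv
  have hpos_part : 0 < ∫ ω, max (B ω) 0 ∂P :=
    (integral_max_zero_gaussianReal_pos 0 one_ne_zero).trans_eq
      (hB'.integral_comp (f := fun x ↦ max x 0) (by fun_prop)).symm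
  refine ⟨hmoment, fun huv ↦ ?_⟩
  rw [hmoment]
  exact mul_ne_zero (mul_ne_zero three_ne_zero hpos_part.ne') (sub_ne_zero.mpr (mod_cast huv))

/-- Let `B`, `Gu`, `Gv` be independent, with `B` standard normal, `Gu ~ N(0,u)`,
`Gv ~ N(0,v)`, `u, v > 0`.  For `X := B + Gu·1_{B>0} + Gv·1_{B≤0}` one has
`E[X³] = 3 E[B⁺] (u − v)`, which is nonzero whenever `u ≠ v`. -/
theorem third_moment_ocone_counterexample {Ω : Type*} [MeasurableSpace Ω]
    (P : Measure Ω) [IsProbabilityMeasure P] (B Gu Gv : Ω → ℝ)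
    (u v : NNReal) (hu : 0 < u) (hv : 0 < v)
    (hB : Measure.map B P = gaussianReal 0 1)
    (hGu : Measure.map Gu P = gaussianReal 0 u)
    (hGv : Measure.map Gv P = gaussianReal 0 v)
    (hindep : iIndepFun ![B, Gu, Gv] P)
    (X : Ω → ℝ) (hX : ∀ ω, X ω = B ω + (if 0 < B ω then Gu ω else Gv ω)) :
    (∫ ω, (X ω) ^ 3 ∂P = 3 * (∫ ω, max (B ω) 0 ∂P) * ((u : ℝ) - (v : ℝ))) ∧
      (u ≠ v → ∫ ω, (X ω) ^ 3 ∂P ≠ 0) :=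
  third_moment_ocone_counterexample_general P B Gu Gv u v hB hGu hGv hindep X hX
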